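/- Suppose G(V,E) satisfies the sufficient condition for parameter f, F is the set of faulty nodes with |F| ≤ f, and consider an execution of the Middle algorithm. Suppose at the end of iteration s the fault-free nodes V∖F are partitioned into nonempty sets R and L such that R propagates to L in l steps. Let X = max_{j∈R} v_j[s]. Then for every fault-free node i ∈ V∖F: U[s] − v_i[s+l] ≥ α^l·(U[s] − X). -/

import Mathlib

open Finset Filter

variable {V : Type} [Fintype V] [DecidableEq V]

/-- Incoming neighbors of node `v` in the directed graph with edge set `E`. -/
def NinSet (E : Finset (V × V)) (v : V) : Finset V :=
  Finset.univ.filter (fun u => (u, v) ∈ E)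

/-- `A ⇒ B`: there is a node in `B` with more than 1/3 of its incoming neighbors in `A`. -/
def ImpRel (E : Finset (V × V)) (A B : Finset V) : Prop :=
  ∃ v ∈ B, (NinSet E v).card < 3 * ((NinSet E v) ∩ A).card

/-- `in(A ⇒ B)`: the set of nodes in `B` with more than 1/3 of incoming neighbors in `A`. -/
def inRel (E : Finset (V × V)) (A B : Finset V) : Finset V :=
  B.filter (fun v => (NinSet E v).card < 3 * ((NinSet E v) ∩ A).card)

/-- `A` propagates to `B` in `l` steps. -/
def PropagatesIn (E : Finset (V × V)) (A B : Finset V) (l : ℕ) : Prop :=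
  0 < l ∧ ∃ As Bs : ℕ → Finset V,
    As 0 = A ∧ Bs 0 = B ∧ As l = A ∪ B ∧ Bs l = ∅ ∧
    (∀ τ < l, Bs τ ≠ ∅) ∧
    (∀ τ < l, ImpRel E (As τ) (Bs τ) ∧
      As (τ + 1) = As τ ∪ inRel E (As τ) (Bs τ) ∧
      Bs (τ + 1) = Bs τ \ inRel E (As τ) (Bs τ))

/-- `A` propagates to `B` (in some number of steps). -/
def Propagates (E : Finset (V × V)) (A B : Finset V) : Prop :=
  ∃ l, PropagatesIn E A B l

/-- The sufficient condition for parameter `f`. -/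
def SuffCond (E : Finset (V × V)) (f : ℕ) : Prop :=
  (∀ v : V, 3 * f ≤ (NinSet E v).card) ∧
  (∀ F L C R : Finset V,
    F ∪ L ∪ C ∪ R = Finset.univ →
    Disjoint F L → Disjoint F C → Disjoint F R →
    Disjoint L C → Disjoint L R → Disjoint C R →
    L.Nonempty → R.Nonempty → F.card ≤ f →
    ImpRel E (C ∪ R) L ∨ ImpRel E (L ∪ C) R)

/-- The weight `a_i = 1/(|N_i^-| - 2⌊|N_i^-|/3⌋ + 1)` used in the Middle algorithm. -/
noncomputable def middleWeight (E : Finset (V × V)) (i : V) : ℝ :=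
  (((NinSet E i).card - 2 * ((NinSet E i).card / 3) + 1 : ℕ) : ℝ)⁻¹

/-- `α = min_{i ∈ V} a_i`. -/
noncomputable def alphaMin (E : Finset (V × V)) : ℝ :=
  ⨅ i : V, middleWeight E i

/-- An execution of the Middle algorithm on graph `E` with faulty set `F`. -/
structure MiddleExec (E : Finset (V × V)) (F : Finset V) where
  /-- `state i t` is the state `v_i[t]` (meaningful for fault-free `i`). -/
  state : V → ℕ → ℝ
  /-- `w t i j` is the value node `i` receives from `j ∈ N_i^-` in iteration `t ≥ 1`. -/
  w : ℕ → V → V → ℝ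
  /-- the set `B` at node `i` in iteration `t`. -/
  Bs : ℕ → V → Finset V
  /-- the set `T` at node `i` in iteration `t`. -/
  Ts : ℕ → V → Finset V
  /-- the set `M` at node `i` in iteration `t`. -/
  Ms : ℕ → V → Finset V
  w_honest : ∀ t, 1 ≤ t → ∀ i, i ∉ F → ∀ j ∈ NinSet E i, j ∉ F →
    w t i j = state j (t - 1)
  part_union : ∀ t, 1 ≤ t → ∀ i, i ∉ F → Bs t i ∪ Ts t i ∪ Ms t i = NinSet E i
  disj_BT : ∀ t, 1 ≤ t → ∀ i, i ∉ F → Disjoint (Bs t i) (Ts t i)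
  disj_BM : ∀ t, 1 ≤ t → ∀ i, i ∉ F → Disjoint (Bs t i) (Ms t i)
  disj_TM : ∀ t, 1 ≤ t → ∀ i, i ∉ F → Disjoint (Ts t i) (Ms t i)
  card_B : ∀ t, 1 ≤ t → ∀ i, i ∉ F → (Bs t i).card = (NinSet E i).card / 3
  card_T : ∀ t, 1 ≤ t → ∀ i, i ∉ F → (Ts t i).card = (NinSet E i).card / 3
  le_BM : ∀ t, 1 ≤ t → ∀ i, i ∉ F → ∀ j ∈ Bs t i, ∀ k ∈ Ms t i, w t i j ≤ w t i k
  le_MT : ∀ t, 1 ≤ t → ∀ i, i ∉ F → ∀ j ∈ Ms t i, ∀ k ∈ Ts t i, w t i j ≤ w t i k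
  update : ∀ t, 1 ≤ t → ∀ i, i ∉ F →
    state i t = middleWeight E i * (state i (t - 1) + ∑ j ∈ Ms t i, w t i j)

/-- `U[t]`: the maximum state among fault-free nodes at the end of iteration `t`. -/
noncomputable def Umax {E : Finset (V × V)} {F : Finset V}
    (exec : MiddleExec E F) (t : ℕ) : ℝ :=
  ⨆ i : {i : V // i ∉ F}, exec.state i.1 t

/-- `μ[t]`: the minimum state among fault-free nodes at the end of iteration `t`. -/
noncomputable def muMin {E : Finset (V × V)} {F : Finset V}
    (exec : MiddleExec E F) (t : ℕ) : ℝ :=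
  ⨅ i : {i : V // i ∉ F}, exec.state i.1 t

/-!
A fault-free node discards the `⌊|N_i^-|/3⌋` largest and smallest received values, and at most
`f ≤ |N_i^-|/3` of its neighbours are faulty, so every value it keeps is dominated by the value
of a fault-free neighbour: the maximum `U` of the fault-free states never increases.  If the
node's own value or one of the kept values lies `δ` below `U`, its new value, an average with
weight `a_i`, lies at least `a_i δ` below `U`.  A node of `in(A_τ ⇒ B_τ)` has more than a third
of its in-neighbours in `A_τ`, so one of them escapes the `⌊|N_i^-|/3⌋` discarded smallest
values and some kept value is at most its value.  By induction the nodes of `A_τ` stay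
`α^τ (U - X)` below `U`, and `A_l = R ∪ L` consists of all fault-free nodes.
-/

open Finset

lemma add_sum_le_of_exists_le {ι : Type*} [DecidableEq ι] {s : Finset ι} {g : ι → ℝ} {x U z : ℝ}
    (hx : x ≤ U) (hg : ∀ j ∈ s, g j ≤ U) (hz : x ≤ z ∨ ∃ j ∈ s, g j ≤ z) :
    x + ∑ j ∈ s, g j ≤ z + #s * U := by
  rcases hz with hxz | ⟨j₀, hj₀, hj₀z⟩
  · have := s.sum_le_card_nsmul g U hg
    rw [nsmul_eq_mul] at this
    linarith
  · have hrest := (s.erase j₀).sum_le_card_nsmul g U fun j hj => hg j (mem_of_mem_erase hj)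
    rw [nsmul_eq_mul, card_erase_of_mem hj₀, Nat.cast_pred (card_pos.mpr ⟨j₀, hj₀⟩)] at hrest
    rw [← add_sum_erase s g hj₀]
    linarith

lemma subset_of_le_of_eq_union {α : Type*} [DecidableEq α] {As Cs : ℕ → Finset α} {l : ℕ}
    (h : ∀ τ < l, As (τ + 1) = As τ ∪ Cs τ) {τ : ℕ} (hτ : τ ≤ l) : As τ ⊆ As l := by
  induction hτ using Nat.decreasingInduction with
  | self => exact Subset.rfl
  | of_succ k hk ih => exact (h k hk ▸ subset_union_left).trans ih

lemma alphaMin_nonneg (E : Finset (V × V)) : 0 ≤ alphaMin E :=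
  Real.iInf_nonneg fun _ => inv_nonneg.mpr (Nat.cast_nonneg _)

lemma alphaMin_le (E : Finset (V × V)) (i : V) : alphaMin E ≤ middleWeight E i :=
  ciInf_le (Set.finite_range _).bddBelow i

namespace MiddleExec

variable {E : Finset (V × V)} {F : Finset V} (exec : MiddleExec E F)
  {t : ℕ} {i : V}

lemma le_Umax (hi : i ∉ F) : exec.state i t ≤ Umax exec t :=
  le_ciSup (f := fun j : {j : V // j ∉ F} => exec.state j.1 t)
    (Set.finite_range _).bddAbove ⟨i, hi⟩

lemma Ms_subset (ht : 1 ≤ t) (hi : i ∉ F) : exec.Ms t i ⊆ NinSet E i :=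
  exec.part_union t ht i hi ▸ subset_union_right

lemma Ts_subset (ht : 1 ≤ t) (hi : i ∉ F) : exec.Ts t i ⊆ NinSet E i := fun _ hk =>
  exec.part_union t ht i hi ▸ mem_union_left _ (mem_union_right _ hk)

lemma card_Ms_add (ht : 1 ≤ t) (hi : i ∉ F) :
    #(exec.Ms t i) + 2 * (#(NinSet E i) / 3) = #(NinSet E i) := by
  have hdisj : Disjoint (exec.Bs t i ∪ exec.Ts t i) (exec.Ms t i) :=
    disjoint_union_left.mpr ⟨exec.disj_BM t ht i hi, exec.disj_TM t ht i hi⟩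
  have hcard := congrArg card (exec.part_union t ht i hi)
  rw [card_union_of_disjoint hdisj, card_union_of_disjoint (exec.disj_BT t ht i hi),
    exec.card_B t ht i hi, exec.card_T t ht i hi] at hcard
  omega

lemma middleWeight_eq (ht : 1 ≤ t) (hi : i ∉ F) :
    middleWeight E i = ((#(exec.Ms t i) : ℝ) + 1)⁻¹ := by
  have hcard := exec.card_Ms_add ht hi
  rw [middleWeight, show #(NinSet E i) - 2 * (#(NinSet E i) / 3) + 1 = #(exec.Ms t i) + 1 by
    omega]
  push_cast
  rfl

lemma exists_mem_inter_notMem_Bs (ht : 1 ≤ t) (hi : i ∉ F) {A : Finset V}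
    (hA : #(NinSet E i) < 3 * #(NinSet E i ∩ A)) :
    ∃ k ∈ NinSet E i ∩ A, k ∉ exec.Bs t i := by
  by_contra! hsub
  have := card_le_card (show NinSet E i ∩ A ⊆ exec.Bs t i from hsub)
  rw [exec.card_B t ht i hi] at this
  omega

lemma exists_mem_Ms_w_le (ht : 1 ≤ t) (hi : i ∉ F) {k : V} (hk : k ∈ NinSet E i)
    (hkB : k ∉ exec.Bs t i) : ∃ j ∈ exec.Ms t i, exec.w t i j ≤ exec.w t i k := by
  rw [← exec.part_union t ht i hi, mem_union, mem_union] at hk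
  rcases hk with (hkB' | hkT) | hkM
  · exact absurd hkB' hkB
  · obtain ⟨j, hj⟩ : (exec.Ms t i).Nonempty := by
      have := exec.card_Ms_add ht hi
      have := card_pos.mpr ⟨k, exec.Ts_subset ht hi hkT⟩
      rw [← card_pos]
      omega
    exact ⟨j, hj, exec.le_MT t ht i hi j hj k hkT⟩
  · exact ⟨k, hkM, le_rfl⟩

lemma exists_fault_free_w_le (ht : 1 ≤ t) (hi : i ∉ F) (hdeg : 3 * #F ≤ #(NinSet E i))
    {j : V} (hj : j ∈ exec.Ms t i) :
    ∃ k ∈ NinSet E i, k ∉ F ∧ exec.w t i j ≤ exec.w t i k := by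
  by_cases hjF : j ∈ F
  · obtain ⟨k, hkT, hkF⟩ : ∃ k ∈ exec.Ts t i, k ∉ F := by
      by_contra! hT
      have := card_le_card (insert_subset hjF hT)
      rw [card_insert_of_notMem (disjoint_right.mp (exec.disj_TM t ht i hi) hj),
        exec.card_T t ht i hi] at this
      omega
    exact ⟨k, exec.Ts_subset ht hi hkT, hkF, exec.le_MT t ht i hi j hj k hkT⟩
  · exact ⟨j, exec.Ms_subset ht hi hj, hjF, le_rfl⟩

lemma w_succ_eq (hi : i ∉ F) {k : V} (hk : k ∈ NinSet E i) (hkF : k ∉ F) :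
    exec.w (t + 1) i k = exec.state k t :=
  exec.w_honest (t + 1) (Nat.le_add_left 1 t) i hi k hk hkF

lemma w_succ_le (hi : i ∉ F) (hdeg : 3 * #F ≤ #(NinSet E i)) {K : ℝ}
    (hK : ∀ k, k ∉ F → exec.state k t ≤ K) {j : V} (hj : j ∈ exec.Ms (t + 1) i) :
    exec.w (t + 1) i j ≤ K := by
  obtain ⟨k, hk, hkF, hjk⟩ := exec.exists_fault_free_w_le (Nat.le_add_left 1 t) hi hdeg hj
  exact hjk.trans ((exec.w_succ_eq hi hk hkF).trans_le (hK k hkF))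

lemma state_succ_le_sub (hi : i ∉ F) {U z : ℝ}
    (hw : ∀ j ∈ exec.Ms (t + 1) i, exec.w (t + 1) i j ≤ U) (hx : exec.state i t ≤ U)
    (hz : exec.state i t ≤ z ∨ ∃ j ∈ exec.Ms (t + 1) i, exec.w (t + 1) i j ≤ z) :
    exec.state i (t + 1) ≤ U - middleWeight E i * (U - z) := by
  have hsum := add_sum_le_of_exists_le hx hw hz
  rw [exec.update (t + 1) (Nat.le_add_left 1 t) i hi,
    exec.middleWeight_eq (Nat.le_add_left 1 t) hi, Nat.add_sub_cancel]
  set m : ℝ := (#(exec.Ms (t + 1) i) : ℝ)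
  have hm : m + 1 ≠ 0 := by positivity
  calc (m + 1)⁻¹ * (exec.state i t + ∑ j ∈ exec.Ms (t + 1) i, exec.w (t + 1) i j)
      ≤ (m + 1)⁻¹ * (z + m * U) := by gcongr
    _ = U - (m + 1)⁻¹ * (U - z) := by field_simp; ring

variable (hdeg : ∀ i, 3 * #F ≤ #(NinSet E i))
include hdeg

lemma state_succ_le {K : ℝ} (hK : ∀ k, k ∉ F → exec.state k t ≤ K) (hi : i ∉ F) :
    exec.state i (t + 1) ≤ K := by
  simpa using exec.state_succ_le_sub (z := K) hi (fun j => exec.w_succ_le hi (hdeg i) hK)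
    (hK i hi) (Or.inl (hK i hi))

lemma state_le_Umax {s : ℕ} (hst : s ≤ t) : ∀ i, i ∉ F → exec.state i t ≤ Umax exec s := by
  induction t, hst using Nat.le_induction with
  | base => exact fun i => exec.le_Umax
  | succ t _ ih => exact fun i => exec.state_succ_le hdeg ih

lemma state_succ_le_of_mem_union_inRel {A B : Finset V} (hAF : ∀ j ∈ A, j ∉ F) {U δ : ℝ}
    (hU : ∀ k, k ∉ F → exec.state k t ≤ U) (hA : ∀ j ∈ A, exec.state j t ≤ U - δ)
    (hi : i ∉ F) (hiA : i ∈ A ∪ inRel E A B) :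
    exec.state i (t + 1) ≤ U - middleWeight E i * δ := by
  have hz : exec.state i t ≤ U - δ ∨
      ∃ j ∈ exec.Ms (t + 1) i, exec.w (t + 1) i j ≤ U - δ := by
    rcases mem_union.mp hiA with hiA | hiIn
    · exact Or.inl (hA i hiA)
    · obtain ⟨k, hkNA, hkB⟩ := exec.exists_mem_inter_notMem_Bs (Nat.le_add_left 1 t) hi
        (mem_filter.mp hiIn).2
      obtain ⟨hkN, hkA⟩ := mem_inter.mp hkNA
      obtain ⟨j, hj, hjk⟩ := exec.exists_mem_Ms_w_le (Nat.le_add_left 1 t) hi hkN hkB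
      exact Or.inr ⟨j, hj, hjk.trans ((exec.w_succ_eq hi hkN (hAF k hkA)).trans_le (hA k hkA))⟩
  simpa using exec.state_succ_le_sub hi (fun j => exec.w_succ_le hi (hdeg i) hU) (hU i hi) hz

lemma state_le_of_eq_union_inRel {s l : ℕ} {As Bs : ℕ → Finset V}
    (hAs : ∀ τ < l, As (τ + 1) = As τ ∪ inRel E (As τ) (Bs τ)) (hAF : ∀ j ∈ As l, j ∉ F)
    {U δ : ℝ} (hU : ∀ t, s ≤ t → ∀ k, k ∉ F → exec.state k t ≤ U) (hδ : 0 ≤ δ)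
    (h₀ : ∀ j ∈ As 0, exec.state j s ≤ U - δ) :
    ∀ τ ≤ l, ∀ i ∈ As τ, exec.state i (s + τ) ≤ U - alphaMin E ^ τ * δ := by
  intro τ
  induction τ with
  | zero => simpa using h₀
  | succ τ ih =>
    intro hτ i hi
    have hAτF : ∀ j ∈ As τ, j ∉ F := fun j hj =>
      hAF j (subset_of_le_of_eq_union hAs (Nat.le_of_succ_le hτ) hj)
    have hstep := exec.state_succ_le_of_mem_union_inRel hdeg hAτF (hU (s + τ) le_self_add)
      (ih (Nat.le_of_succ_le hτ)) (hAF i (subset_of_le_of_eq_union hAs hτ hi))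
      (hAs τ hτ ▸ hi)
    have hα : alphaMin E * (alphaMin E ^ τ * δ) ≤ middleWeight E i * (alphaMin E ^ τ * δ) :=
      mul_le_mul_of_nonneg_right (alphaMin_le E i)
        (mul_nonneg (pow_nonneg (alphaMin_nonneg E) τ) hδ)
    rw [← add_assoc, pow_succ']
    linarith

end MiddleExec

theorem all_nodes_upper_bound_general
    (E : Finset (V × V)) (f : ℕ)
    (hsuff : SuffCond E f)
    (F : Finset V) (hF : F.card ≤ f)
    (exec : MiddleExec E F)
    (s l : ℕ) (R L : Finset V)
    (hpart : R ∪ L = Finset.univ \ F)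
    (hRne : R.Nonempty)
    (hprop : PropagatesIn E R L l) :
    ∀ i : V, i ∉ F →
      Umax exec s - exec.state i (s + l) ≥
        alphaMin E ^ l * (Umax exec s - (⨆ j : {j : V // j ∈ R}, exec.state j.1 s)) := by
  obtain ⟨-, As, Bs, hA₀, -, hAl, -, -, hstep⟩ := hprop
  have hdeg : ∀ i, 3 * #F ≤ #(NinSet E i) := fun i => (Nat.mul_le_mul_left 3 hF).trans (hsuff.1 i)
  have hRLF : ∀ j ∈ R ∪ L, j ∉ F := fun j hj => (mem_sdiff.mp (hpart ▸ hj)).2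
  set X := ⨆ j : {j : V // j ∈ R}, exec.state j.1 s
  have hRX : ∀ j ∈ R, exec.state j s ≤ X := fun j hj =>
    le_ciSup (f := fun j : {j : V // j ∈ R} => exec.state j.1 s)
      (Set.finite_range _).bddAbove ⟨j, hj⟩
  have hXU : X ≤ Umax exec s :=
    haveI := hRne.to_subtype
    ciSup_le fun j => exec.le_Umax (hRLF j (mem_union_left L j.2))
  intro i hi
  have := exec.state_le_of_eq_union_inRel hdeg (fun τ hτ => (hstep τ hτ).2.1) (hAl ▸ hRLF)
    (fun t hst => exec.state_le_Umax hdeg hst) (sub_nonneg.mpr hXU)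
    (fun j hj => by linarith [hRX j (hA₀ ▸ hj)]) l le_rfl i
    (by rw [hAl, hpart]; simpa using hi)
  linarith

/-- Claim 3, upper bound for all fault-free nodes after `l` iterations. -/
theorem all_nodes_upper_bound
    (E : Finset (V × V)) (f : ℕ)
    (hn : 2 ≤ Fintype.card V)
    (hloop : ∀ v : V, (v, v) ∉ E)
    (hsuff : SuffCond E f)
    (F : Finset V) (hF : F.card ≤ f)
    (exec : MiddleExec E F)
    (s l : ℕ) (R L : Finset V)
    (hpart : R ∪ L = Finset.univ \ F) (hdisj : Disjoint R L)
    (hRne : R.Nonempty) (hLne : L.Nonempty)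
    (hprop : PropagatesIn E R L l) :
    ∀ i : V, i ∉ F →
      Umax exec s - exec.state i (s + l) ≥
        alphaMin E ^ l * (Umax exec s - (⨆ j : {j : V // j ∈ R}, exec.state j.1 s)) :=
  all_nodes_upper_bound_general E f hsuff F hF exec s l R L hpart hRne hprop
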